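/- (Corollary: characterization of model representations.) Let σ be a nonnegative Borel measure on ℝ with σ(ℝ) = 1, all power moments finite, and ∫|g|² dσ > 0 for every nonzero complex polynomial g, and let (r_n) be the orthonormal polynomials of σ (deg r_n = n, positive leading coefficients, ⟨r_n, r_m⟩_σ = δ_{n,m}) with three-term recurrence x·r_n = a_{n−1} r_{n−1} + b_n r_n + a_n r_{n+1}, a_n > 0, b_n ∈ ℝ. If T is a linear operator on complex polynomials satisfying conditions (ii) and (iii), then there exist real sequences (α_n), (β_n), (γ_n) with γ_n > 0, constants α > 0, β ∈ ℝ, and a linear operator A on finitely supported complex sequences with A e₀ = (1/α)(e₁ − β e₀) and A(J₃ e_n) = J₅ e_n for all n (where J₃ is built from (a_n, b_n) and J₅ from (α_n, β_n, γ_n)), such that T(r_n) = Σ_{m} (A e_n)(m) · r_m for all n ≥ 0; i.e., T is the model representation of the associated operator of a Jacobi-type pencil. -/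

import Mathlib

open Polynomial MeasureTheory

noncomputable section

/-- The standard basis of the space of finitely supported complex sequences. -/
def e (n : ℕ) : ℕ →₀ ℂ := Finsupp.single n 1

/-- The standard basis extended by zero to negative indices. -/
def eZ (n : ℤ) : ℕ →₀ ℂ := if n < 0 then 0 else e n.toNat

/-- Extension of a real sequence by zero to negative indices. -/
def extZ (a : ℕ → ℝ) (n : ℤ) : ℝ := if n < 0 then 0 else a n.toNat

/-- Extension of a sequence of polynomials by zero to negative indices. -/
def extP (p : ℕ → Polynomial ℂ) (n : ℤ) : Polynomial ℂ := if n < 0 then 0 else p n.toNat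

/-- The data of a Jacobi-type pencil `Θ = (J₃, J₅, α, β)`:
`a`, `b` are the entries of the Jacobi matrix `J₃` (`a n > 0`);
`al`, `be`, `ga` are the entries of the five-diagonal matrix `J₅` (`ga n > 0`);
`α > 0`, `β ∈ ℝ`. -/
structure JacobiPencil where
  a : ℕ → ℝ
  b : ℕ → ℝ
  al : ℕ → ℝ
  be : ℕ → ℝ
  ga : ℕ → ℝ
  α : ℝ
  β : ℝ
  ha : ∀ n, 0 < a n
  hga : ∀ n, 0 < ga n
  hα : 0 < α

/-- The `n`-th column `J₃ e_n = a_{n-1} e_{n-1} + b_n e_n + a_n e_{n+1}` of the Jacobi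
matrix (terms with negative indices omitted). -/
def J3col (Θ : JacobiPencil) (n : ℕ) : ℕ →₀ ℂ :=
  (extZ Θ.a ((n : ℤ) - 1) : ℂ) • eZ ((n : ℤ) - 1) + (Θ.b n : ℂ) • e n + (Θ.a n : ℂ) • e (n + 1)

/-- The `n`-th column
`J₅ e_n = γ_{n-2} e_{n-2} + β_{n-1} e_{n-1} + α_n e_n + β_n e_{n+1} + γ_n e_{n+2}`
of the five-diagonal matrix (terms with negative indices omitted). -/
def J5col (Θ : JacobiPencil) (n : ℕ) : ℕ →₀ ℂ :=
  (extZ Θ.ga ((n : ℤ) - 2) : ℂ) • eZ ((n : ℤ) - 2)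
    + (extZ Θ.be ((n : ℤ) - 1) : ℂ) • eZ ((n : ℤ) - 1)
    + (Θ.al n : ℂ) • e n + (Θ.be n : ℂ) • e (n + 1) + (Θ.ga n : ℂ) • e (n + 2)

/-- `A` is the associated operator of the Jacobi-type pencil `Θ`:
`A e₀ = (1/α)(e₁ - β e₀)` and `A (J₃ eₙ) = J₅ eₙ` for all `n`. -/
def IsAssociatedOperator (Θ : JacobiPencil) (A : Module.End ℂ (ℕ →₀ ℂ)) : Prop :=
  A (e 0) = ((Θ.α : ℂ))⁻¹ • (e 1 - (Θ.β : ℂ) • e 0) ∧ ∀ n : ℕ, A (J3col Θ n) = J5col Θ n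

/-- `p` is the family of polynomials associated to the Jacobi-type pencil `Θ`:
`p₀ = 1`, `p₁(λ) = αλ + β`, and for all `n ≥ 0`
`γ_n p_{n+2} = -γ_{n-2} p_{n-2} - (β_{n-1} - λ a_{n-1}) p_{n-1}
  - (α_n - λ b_n) p_n - (β_n - λ a_n) p_{n+1}`,
with `p_{-2} = p_{-1} = 0` and coefficients with negative indices set to zero. -/
def IsAssociatedPolynomials (Θ : JacobiPencil) (p : ℕ → Polynomial ℂ) : Prop :=
  p 0 = 1 ∧ p 1 = C (Θ.α : ℂ) * X + C (Θ.β : ℂ) ∧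
  ∀ n : ℕ, C (Θ.ga n : ℂ) * p (n + 2) =
      - C (extZ Θ.ga ((n : ℤ) - 2) : ℂ) * extP p ((n : ℤ) - 2)
      - (C (extZ Θ.be ((n : ℤ) - 1) : ℂ) - X * C (extZ Θ.a ((n : ℤ) - 1) : ℂ))
          * extP p ((n : ℤ) - 1)
      - (C (Θ.al n : ℂ) - X * C (Θ.b n : ℂ)) * p n
      - (C (Θ.be n : ℂ) - X * C (Θ.a n : ℂ)) * p (n + 1)

/-- The `l₂` inner product `Σ_{k≥0} f(k) conj(g(k))` of two finitely supported sequences. -/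
def ipl2 (f g : ℕ →₀ ℂ) : ℂ := ∑ k ∈ f.support ∪ g.support, f k * (starRingEnd ℂ) (g k)

/-- The inner product `⟨u, v⟩_σ = ∫ u(x) conj(v(x)) dσ(x)` of two complex polynomials. -/
def ipm (σ : Measure ℝ) (u v : Polynomial ℂ) : ℂ :=
  ∫ x, u.eval (x : ℂ) * (starRingEnd ℂ) (v.eval (x : ℂ)) ∂σ

/-- All power moments of `σ` are finite. -/
def HasFiniteMoments (σ : Measure ℝ) : Prop := ∀ k : ℕ, Integrable (fun x => x ^ k) σ

/-- `∫ |g|² dσ > 0` for every nonzero complex polynomial `g`. -/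
def PosOnPolys (σ : Measure ℝ) : Prop :=
  ∀ g : Polynomial ℂ, g ≠ 0 → 0 < ∫ x, ‖g.eval (x : ℂ)‖ ^ 2 ∂σ

/-- Condition (ii): for each `k`, `T x^k = ξ_{k,k+1} x^{k+1} + Σ_{j=0}^k ξ_{k,j} x^j`
with `ξ_{k,k+1} > 0` and all `ξ_{k,j}` real. -/
def CondII (T : Module.End ℂ (Polynomial ℂ)) : Prop :=
  ∀ k : ℕ, ∃ ξ : ℕ → ℝ, 0 < ξ (k + 1) ∧
    T (X ^ k) = ∑ j ∈ Finset.range (k + 2), C (ξ j : ℂ) * X ^ j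

/-- Condition (iii): `⟨T(x·u), v⟩_σ = ⟨u, T(x·v)⟩_σ` for all polynomials `u`, `v`,
i.e., the operator `T Λ₀` is symmetric. -/
def CondIII (σ : Measure ℝ) (T : Module.End ℂ (Polynomial ℂ)) : Prop :=
  ∀ u v : Polynomial ℂ, ipm σ (T (X * u)) v = ipm σ u (T (X * v))

/-!
Let `R p` be the coordinate vector of `p` in the basis `(rₙ)` and put `A = R ∘ T ∘ R⁻¹`, so that
`T rₙ = R⁻¹ (A eₙ)` by construction. The three-term recurrence says `R⁻¹ (J₃ eₙ) = x rₙ`, so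
`A (J₃ eₙ)` is the coordinate vector of `T (x rₙ)`, with entries `⟨T(x rₙ), rₘ⟩_σ`. These vanish
for `m > n + 2` because `T` raises degrees by at most one (ii), hence also for `m < n - 2` by the
symmetry (iii); they are real because `T` and the `rₙ` have real coefficients; and the entry at
`m = n + 2` is `ξ lc(rₙ) / lc(rₙ₊₂) > 0`. So the vector is the column `J₅ eₙ` of a five-diagonal
matrix. In the same way `A e₀ = R (T r₀)` is real, supported on `{0, 1}` and positive at `1`, i.e.
of the form `α⁻¹ (e₁ - β e₀)` with `α > 0`.
-/

open Module ComplexOrder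

section InnerProduct

variable {σ : Measure ℝ}

lemma integrable_eval_ofReal (hmom : HasFiniteMoments σ) (p : ℂ[X]) :
    Integrable (fun x : ℝ => p.eval (x : ℂ)) σ := by
  induction p using Polynomial.induction_on' with
  | add p q hp hq => simp only [eval_add]; exact hp.add hq
  | monomial n c => simpa [eval_monomial] using (hmom n).ofReal.const_mul c

lemma conj_eval_ofReal (p : ℂ[X]) (x : ℝ) :
    starRingEnd ℂ (p.eval (x : ℂ)) = (p.map (starRingEnd ℂ)).eval (x : ℂ) := by
  rw [eval_map]
  conv_rhs => rw [← Complex.conj_ofReal x, eval₂_at_apply]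

lemma ipm_add_left (hmom : HasFiniteMoments σ) (u w v : ℂ[X]) :
    ipm σ (u + w) v = ipm σ u v + ipm σ w v := by
  have hint : ∀ p : ℂ[X],
      Integrable (fun x : ℝ => p.eval (x : ℂ) * starRingEnd ℂ (v.eval (x : ℂ))) σ := fun p => by
      simpa only [conj_eval_ofReal, eval_mul] using
        integrable_eval_ofReal hmom (p * v.map (starRingEnd ℂ))
  simp only [ipm, eval_add, add_mul]
  exact integral_add (hint u) (hint w)

lemma ipm_smul_left (c : ℂ) (u v : ℂ[X]) : ipm σ (c • u) v = c * ipm σ u v := by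
  simp only [ipm, eval_smul, smul_eq_mul, mul_assoc]
  exact integral_const_mul c _

lemma ipm_conj_symm (u v : ℂ[X]) : ipm σ u v = starRingEnd ℂ (ipm σ v u) := by
  simp only [ipm, ← integral_conj, map_mul, Complex.conj_conj, mul_comm]

lemma Module.Basis.ipm_eq_repr (hmom : HasFiniteMoments σ) {ι : Type*}
    [DecidableEq ι] (B : Basis ι ℂ ℂ[X])
    (horth : ∀ i j, ipm σ (B i) (B j) = if i = j then 1 else 0) (p : ℂ[X]) (j : ι) :
    ipm σ p (B j) = B.repr p j := by
  let L : ℂ[X] →ₗ[ℂ] ℂ :=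
    { toFun := fun p => ipm σ p (B j)
      map_add' := fun u w => ipm_add_left hmom u w _
      map_smul' := fun c u => ipm_smul_left c u _ }
  have hL : L = B.coord j := B.ext fun i => by simp [L, horth, Finsupp.single_apply]
  exact LinearMap.congr_fun hL p

end InnerProduct

lemma conj_eval_of_mem_liftsRing {p : ℂ[X]} (hp : p ∈ liftsRing Complex.ofRealHom) (x : ℝ) :
    starRingEnd ℂ (p.eval (x : ℂ)) = p.eval (x : ℂ) := by
  obtain ⟨q, rfl⟩ := (mem_lifts p).1 ((lifts_iff_liftsRing _ p).2 hp)
  rw [eval_map, ← Complex.ofRealHom_eq_coe, eval₂_at_apply, Complex.ofRealHom_eq_coe,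
    Complex.conj_ofReal]

lemma conj_ipm_of_mem_liftsRing {σ : Measure ℝ} {p q : ℂ[X]}
    (hp : p ∈ liftsRing Complex.ofRealHom) (hq : q ∈ liftsRing Complex.ofRealHom) :
    starRingEnd ℂ (ipm σ p q) = ipm σ p q := by
  simp only [ipm, ← integral_conj, map_mul, conj_eval_of_mem_liftsRing hp,
    conj_eval_of_mem_liftsRing hq]

lemma C_mem_liftsRing_ofReal {c : ℂ} (hc : c.im = 0) : C c ∈ liftsRing Complex.ofRealHom := by
  rw [← lifts_iff_liftsRing, ← Complex.re_add_im c, hc]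
  simpa using C_mem_lifts Complex.ofRealHom c.re

lemma X_mem_liftsRing_ofReal : (X : ℂ[X]) ∈ liftsRing Complex.ofRealHom :=
  (lifts_iff_liftsRing _ _).1 (X_mem_lifts _)

lemma LinearMap.map_eq_sum_coeff_smul {R M : Type*} [CommSemiring R] [AddCommMonoid M]
    [Module R M] (f : R[X] →ₗ[R] M) {p : R[X]} {d : ℕ} (hp : p.natDegree ≤ d) :
    f p = ∑ k ∈ Finset.range (d + 1), p.coeff k • f (X ^ k) := by
  conv_lhs => rw [as_sum_range' p (d + 1) (Nat.lt_succ_of_le hp)]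
  simp only [map_sum, ← smul_X_eq_monomial, map_smul]

namespace CondII

variable {T : Module.End ℂ ℂ[X]}

lemma natDegree_map_X_pow_le (hT : CondII T) (k : ℕ) : (T (X ^ k)).natDegree ≤ k + 1 := by
  obtain ⟨ξ, -, hξ⟩ := hT k
  rw [hξ]
  refine natDegree_sum_le_of_forall_le _ _ fun j hj => (natDegree_C_mul_X_pow_le _ _).trans ?_
  simpa [Nat.lt_succ_iff] using hj

lemma natDegree_map_le (hT : CondII T) {p : ℂ[X]} {d : ℕ} (hp : p.natDegree ≤ d) :
    (T p).natDegree ≤ d + 1 := by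
  rw [T.map_eq_sum_coeff_smul hp]
  refine natDegree_sum_le_of_forall_le _ _ fun k hk => (natDegree_smul_le _ _).trans ?_
  exact (hT.natDegree_map_X_pow_le k).trans (by simpa [Nat.lt_succ_iff] using hk)

lemma exists_coeff_map_succ (hT : CondII T) (d : ℕ) :
    ∃ ξ : ℝ, 0 < ξ ∧ ∀ p : ℂ[X], p.natDegree ≤ d → (T p).coeff (d + 1) = ξ * p.coeff d := by
  obtain ⟨ξ, hξpos, hξ⟩ := hT d
  refine ⟨ξ (d + 1), hξpos, fun p hp => ?_⟩
  rw [T.map_eq_sum_coeff_smul hp, finsetSum_coeff, Finset.sum_eq_single_of_mem d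
    (Finset.self_mem_range_succ d)]
  · rw [coeff_smul, hξ, finsetSum_coeff, smul_eq_mul, mul_comm]
    simp
  · intro k hk hkd
    have hlt : (T (X ^ k)).natDegree < d + 1 :=
      (hT.natDegree_map_X_pow_le k).trans_lt (by simp at hk; omega)
    rw [coeff_smul, coeff_eq_zero_of_natDegree_lt hlt, smul_zero]

lemma map_mem_liftsRing (hT : CondII T) {p : ℂ[X]} (hp : p ∈ liftsRing Complex.ofRealHom) :
    T p ∈ liftsRing Complex.ofRealHom := by
  rw [T.map_eq_sum_coeff_smul le_rfl]
  refine Subring.sum_mem _ fun k _ => ?_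
  obtain ⟨ξ, -, hξ⟩ := hT k
  rw [smul_eq_C_mul, hξ]
  refine Subring.mul_mem _ ?_ (Subring.sum_mem _ fun j _ => ?_)
  · obtain ⟨c, hc⟩ := (lifts_iff_coeff_lifts p).1 ((lifts_iff_liftsRing _ p).2 hp) k
    exact C_mem_liftsRing_ofReal (by simp [← hc])
  · exact Subring.mul_mem _ (C_mem_liftsRing_ofReal (by simp))
      (Subring.pow_mem _ X_mem_liftsRing_ofReal _)

end CondII

def degreeBasis {K : Type*} [Field K] (r : ℕ → K[X]) (hdeg : ∀ n, (r n).degree = n) :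
    Basis ℕ K K[X] :=
  (Sequence.mk r hdeg).basis fun n => (leadingCoeff_ne_zero.2 (Sequence.ne_zero _ n)).isUnit

section degreeBasis

variable {K : Type*} [Field K] {r : ℕ → K[X]} (hdeg : ∀ n, (r n).degree = n)

@[simp]
lemma coe_degreeBasis : ⇑(degreeBasis r hdeg) = r :=
  funext fun n => Sequence.basis_eq_self _ _ n

lemma degreeBasis_repr_eq_zero_of_natDegree_lt {p : K[X]} {m : ℕ} (hm : p.natDegree < m) :
    (degreeBasis r hdeg).repr p m = 0 := by
  have hspan : p ∈ Submodule.span K (degreeBasis r hdeg '' Set.Iic p.natDegree) := by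
    rw [coe_degreeBasis, show r = ⇑(Sequence.mk r hdeg) from rfl,
      Sequence.span_degreeLE _ fun i _ => (leadingCoeff_ne_zero.2 (Sequence.ne_zero _ i)).isUnit]
    exact mem_degreeLE.2 degree_le_natDegree
  by_contra hne
  have := Basis.repr_support_subset_of_mem_span _ _ hspan (Finsupp.mem_support_iff.2 hne)
  simp only [Set.mem_Iic] at this
  omega

lemma degreeBasis_repr_mul_leadingCoeff {p : K[X]} {d : ℕ} (hp : p.natDegree ≤ d) :
    (degreeBasis r hdeg).repr p d * (r d).leadingCoeff = p.coeff d := by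
  have hnd : ∀ n, (r n).natDegree = n := fun n => natDegree_eq_of_degree_eq_some (hdeg n)
  conv_rhs => rw [← (degreeBasis r hdeg).linearCombination_repr p]
  rw [Finsupp.linearCombination_apply, Finsupp.sum, finsetSum_coeff]
  rw [Finset.sum_eq_single d]
  · simp [leadingCoeff, hnd]
  · intro i hi hid
    have hile : i ≤ d := by
      by_contra! h
      exact Finsupp.mem_support_iff.1 hi
        (degreeBasis_repr_eq_zero_of_natDegree_lt hdeg (hp.trans_lt h))
    rw [coeff_smul, coeff_eq_zero_of_natDegree_lt (by rw [coe_degreeBasis, hnd]; omega),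
      smul_zero]
  · intro hd
    rw [Finsupp.notMem_support_iff.1 hd, zero_smul, coeff_zero]

end degreeBasis

lemma extZ_natCast (a : ℕ → ℝ) (n : ℕ) : extZ a n = a n := by simp [extZ]

lemma eZ_apply (k : ℤ) (m : ℕ) : eZ k m = if k = m then 1 else 0 := by
  unfold eZ e
  split_ifs <;> simp [Finsupp.single_apply] <;> omega

lemma linearCombination_eZ (r : ℕ → ℂ[X]) (k : ℤ) :
    Finsupp.linearCombination ℂ r (eZ k) = extP r k := by
  unfold eZ extP
  split_ifs <;> simp [e]

lemma linearCombination_J3col (Θ : JacobiPencil) (r : ℕ → ℂ[X]) (n : ℕ) :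
    Finsupp.linearCombination ℂ r (J3col Θ n) =
      C (extZ Θ.a ((n : ℤ) - 1) : ℂ) * extP r ((n : ℤ) - 1) + C (Θ.b n : ℂ) * r n
        + C (Θ.a n : ℂ) * r (n + 1) := by
  simp [J3col, linearCombination_eZ, e, ← smul_eq_C_mul]

lemma J5col_apply {Θ : JacobiPencil} {M : ℕ → ℕ → ℝ} (hal : ∀ n, Θ.al n = M n n)
    (hbe : ∀ n, Θ.be n = M n (n + 1)) (hga : ∀ n, Θ.ga n = M n (n + 2))
    (hsymm : ∀ n m, M n m = M m n) (hband : ∀ n m, n + 3 ≤ m → M n m = 0) (n m : ℕ) :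
    J5col Θ n m = M n m := by
  simp only [J5col, Finsupp.add_apply, Finsupp.smul_apply, smul_eq_mul, e, eZ_apply,
    Finsupp.single_apply]
  obtain h | rfl | rfl | rfl | rfl | rfl | h : m + 3 ≤ n ∨ n = m + 2 ∨ n = m + 1 ∨ m = n ∨
      m = n + 1 ∨ m = n + 2 ∨ n + 3 ≤ m := by omega
  all_goals split_ifs <;> try omega
  · rw [hsymm, hband m n h]; simp
  · simp [extZ_natCast, hga, hsymm m]
  · simp [extZ_natCast, hbe, hsymm m]
  · simp [hal]
  · simp [hbe]
  · simp [hga]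
  · rw [hband n m h]; simp

lemma mem_liftsRing_of_recurrence {r : ℕ → ℂ[X]} {a b : ℕ → ℝ} (ha : ∀ n, a n ≠ 0)
    (h0 : r 0 ∈ liftsRing Complex.ofRealHom)
    (hrec : ∀ n : ℕ, X * r n =
      C (extZ a ((n : ℤ) - 1) : ℂ) * extP r ((n : ℤ) - 1) + C (b n : ℂ) * r n
        + C (a n : ℂ) * r (n + 1)) (n : ℕ) :
    r n ∈ liftsRing Complex.ofRealHom := by
  induction n using Nat.strong_induction_on with | _ n ih => ?_
  rcases n with _ | n
  · exact h0
  have hC : ∀ t : ℝ, C (t : ℂ) ∈ liftsRing Complex.ofRealHom :=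
    fun t => C_mem_liftsRing_ofReal (Complex.ofReal_im t)
  have hprev : extP r ((n : ℤ) - 1) ∈ liftsRing Complex.ofRealHom := by
    unfold extP
    split_ifs
    · exact zero_mem _
    · exact ih _ (by omega)
  have hsucc : r (n + 1) = C (((a n)⁻¹ : ℝ) : ℂ) *
      (X * r n - C (extZ a ((n : ℤ) - 1) : ℂ) * extP r ((n : ℤ) - 1) - C (b n : ℂ) * r n) :=
    calc r (n + 1) = C (((a n)⁻¹ : ℝ) : ℂ) * (C (a n : ℂ) * r (n + 1)) := by
          rw [← mul_assoc, ← C_mul, Complex.ofReal_inv, inv_mul_cancel₀ (by exact_mod_cast ha n),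
            C_1, one_mul]
      _ = _ := by rw [hrec n]; ring
  rw [hsucc]
  have hn := ih n (by omega)
  exact mul_mem (hC _) (sub_mem (sub_mem (mul_mem X_mem_liftsRing_ofReal hn)
    (mul_mem (hC _) hprev)) (mul_mem (hC _) hn))

section Coordinates

variable {σ : Measure ℝ} {r : ℕ → ℂ[X]} {T : Module.End ℂ ℂ[X]}

lemma ipm_eq_degreeBasis_repr (hmom : HasFiniteMoments σ) (hdeg : ∀ n, (r n).degree = n)
    (horth : ∀ n m : ℕ, ipm σ (r n) (r m) = if n = m then 1 else 0) (p : ℂ[X]) (m : ℕ) :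
    ipm σ p (r m) = (degreeBasis r hdeg).repr p m := by
  simpa using (degreeBasis r hdeg).ipm_eq_repr hmom (by simpa using horth) p m

lemma ofReal_re_degreeBasis_repr_map (hmom : HasFiniteMoments σ)
    (hdeg : ∀ n, (r n).degree = n)
    (horth : ∀ n m : ℕ, ipm σ (r n) (r m) = if n = m then 1 else 0)
    (hreal : ∀ n, r n ∈ liftsRing Complex.ofRealHom) (hT : CondII T) {p : ℂ[X]}
    (hp : p ∈ liftsRing Complex.ofRealHom) (m : ℕ) :
    (((degreeBasis r hdeg).repr (T p) m).re : ℂ) = (degreeBasis r hdeg).repr (T p) m := by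
  rw [← Complex.conj_eq_iff_re, ← ipm_eq_degreeBasis_repr hmom hdeg horth]
  exact conj_ipm_of_mem_liftsRing (hT.map_mem_liftsRing hp) (hreal m)

lemma CondII.degreeBasis_repr_map_eq_zero (hT : CondII T) (hdeg : ∀ n, (r n).degree = n)
    {p : ℂ[X]} {d m : ℕ} (hp : p.natDegree ≤ d) (hm : d + 1 < m) :
    (degreeBasis r hdeg).repr (T p) m = 0 :=
  degreeBasis_repr_eq_zero_of_natDegree_lt hdeg ((hT.natDegree_map_le hp).trans_lt hm)

lemma CondII.degreeBasis_repr_map_pos (hT : CondII T) (hdeg : ∀ n, (r n).degree = n)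
    {p : ℂ[X]} {d : ℕ} (hlc : 0 < (r (d + 1)).leadingCoeff) (hp : p.natDegree ≤ d)
    (hpd : 0 < p.coeff d) :
    0 < (degreeBasis r hdeg).repr (T p) (d + 1) := by
  obtain ⟨ξ, hξ, hcoeff⟩ := hT.exists_coeff_map_succ d
  have h := degreeBasis_repr_mul_leadingCoeff hdeg (hT.natDegree_map_le hp)
  rw [hcoeff p hp] at h
  rw [eq_div_of_mul_eq hlc.ne' h]
  exact div_pos (mul_pos (by exact_mod_cast hξ) hpd) hlc

end Coordinates

section Pencil

variable {σ : Measure ℝ} {r : ℕ → ℂ[X]} {T : Module.End ℂ ℂ[X]}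

theorem exists_pentadiagonal_degreeBasis_repr_map_X_mul (hmom : HasFiniteMoments σ)
    (hdeg : ∀ n, (r n).degree = n) (hlc : ∀ n, 0 < (r n).leadingCoeff)
    (horth : ∀ n m : ℕ, ipm σ (r n) (r m) = if n = m then 1 else 0)
    (hreal : ∀ n, r n ∈ liftsRing Complex.ofRealHom) (hII : CondII T) (hIII : CondIII σ T) :
    ∃ M : ℕ → ℕ → ℝ, (∀ n m, (degreeBasis r hdeg).repr (T (X * r n)) m = M n m) ∧
      (∀ n m, M n m = M m n) ∧ (∀ n m, n + 3 ≤ m → M n m = 0) ∧ ∀ n, 0 < M n (n + 2) := by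
  have hnd : ∀ n, (X * r n).natDegree ≤ n + 1 := fun n => by
    rw [natDegree_X_mul (by simpa using (hlc n).ne'), natDegree_eq_of_degree_eq_some (hdeg n)]
  have hM := fun n => ofReal_re_degreeBasis_repr_map hmom hdeg horth hreal hII
    (mul_mem X_mem_liftsRing_ofReal (hreal n))
  refine ⟨fun n m => ((degreeBasis r hdeg).repr (T (X * r n)) m).re, fun n m => (hM n m).symm,
    fun n m => ?_, fun n m hnm => ?_, fun n => ?_⟩
  · apply Complex.ofReal_injective
    rw [hM, hM, ← ipm_eq_degreeBasis_repr hmom hdeg horth, hIII, ipm_conj_symm,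
      ipm_eq_degreeBasis_repr hmom hdeg horth, ← hM, Complex.conj_ofReal]
  · simp [hII.degreeBasis_repr_map_eq_zero hdeg (hnd n) (by omega : n + 1 + 1 < m)]
  · refine (Complex.pos_iff.1 (hII.degreeBasis_repr_map_pos hdeg (hlc _) (hnd n) ?_)).1
    simpa [leadingCoeff, natDegree_eq_of_degree_eq_some (hdeg n)] using hlc n

theorem exists_degreeBasis_repr_map_zero (hmom : HasFiniteMoments σ)
    (hdeg : ∀ n, (r n).degree = n) (hlc : ∀ n, 0 < (r n).leadingCoeff)
    (horth : ∀ n m : ℕ, ipm σ (r n) (r m) = if n = m then 1 else 0)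
    (hreal : ∀ n, r n ∈ liftsRing Complex.ofRealHom) (hII : CondII T) :
    ∃ α β : ℝ, 0 < α ∧
      (degreeBasis r hdeg).repr (T (r 0)) = (α : ℂ)⁻¹ • (e 1 - (β : ℂ) • e 0) := by
  set v := (degreeBasis r hdeg).repr (T (r 0))
  have hnd : (r 0).natDegree ≤ 0 := (natDegree_eq_of_degree_eq_some (hdeg 0)).le
  have hv : ∀ m, ((v m).re : ℂ) = v m :=
    ofReal_re_degreeBasis_repr_map hmom hdeg horth hreal hII (hreal 0)
  have hv1 : 0 < (v 1).re := (Complex.pos_iff.1 (hII.degreeBasis_repr_map_pos hdeg (hlc 1) hnd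
    (by simpa [leadingCoeff, natDegree_eq_of_degree_eq_some (hdeg 0)] using hlc 0))).1
  refine ⟨(v 1).re⁻¹, -(v 0).re / (v 1).re, inv_pos.2 hv1, Finsupp.ext fun m => ?_⟩
  rcases m with _ | _ | m
  · simpa [e, hv1.ne', neg_div, mul_div_cancel₀] using (hv 0).symm
  · simpa [e] using (hv 1).symm
  · rw [hII.degreeBasis_repr_map_eq_zero hdeg hnd (by omega)]
    simp [e]

end Pencil

theorem model_representation_characterization_general (σ : Measure ℝ)
    (hmom : HasFiniteMoments σ)
    (r : ℕ → Polynomial ℂ) (hdeg : ∀ n : ℕ, (r n).degree = n)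
    (hlead : ∀ n : ℕ, 0 < ((r n).leadingCoeff).re ∧ ((r n).leadingCoeff).im = 0)
    (horth : ∀ n m : ℕ, ipm σ (r n) (r m) = if n = m then 1 else 0)
    (a b : ℕ → ℝ) (hapos : ∀ n, 0 < a n)
    (hrec : ∀ n : ℕ, X * r n =
      C (extZ a ((n : ℤ) - 1) : ℂ) * extP r ((n : ℤ) - 1) + C (b n : ℂ) * r n
        + C (a n : ℂ) * r (n + 1))
    (T : Module.End ℂ (Polynomial ℂ)) (hII : CondII T) (hIII : CondIII σ T) :
    ∃ Θ : JacobiPencil, Θ.a = a ∧ Θ.b = b ∧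
      ∃ A : Module.End ℂ (ℕ →₀ ℂ), IsAssociatedOperator Θ A ∧
        ∀ n : ℕ, T (r n) = (A (e n)).sum fun m c => c • r m := by
  have hlc : ∀ n, 0 < (r n).leadingCoeff :=
    fun n => Complex.pos_iff.2 ⟨(hlead n).1, (hlead n).2.symm⟩
  have hr0 : r 0 ∈ liftsRing Complex.ofRealHom := by
    rw [eq_C_of_natDegree_eq_zero (natDegree_eq_of_degree_eq_some (hdeg 0))]
    simpa [leadingCoeff, natDegree_eq_of_degree_eq_some (hdeg 0)] using
      C_mem_liftsRing_ofReal (hlead 0).2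
  have hreal := mem_liftsRing_of_recurrence (fun n => (hapos n).ne') hr0 hrec
  obtain ⟨M, hM, hsymm, hband, hγ⟩ :=
    exists_pentadiagonal_degreeBasis_repr_map_X_mul hmom hdeg hlc horth hreal hII hIII
  obtain ⟨α, β, hα, hA0⟩ := exists_degreeBasis_repr_map_zero hmom hdeg hlc horth hreal hII
  set B := degreeBasis r hdeg
  have hA : ∀ v, B.repr.conj T v = B.repr (T (Finsupp.linearCombination ℂ r v)) := fun v => by
    simp [LinearEquiv.conj_apply, B]
  refine ⟨⟨a, b, fun n => M n n, fun n => M n (n + 1), fun n => M n (n + 2), α, β, hapos, hγ, hα⟩,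
    rfl, rfl, B.repr.conj T, ⟨?_, fun n => ?_⟩, fun n => ?_⟩
  · simpa [hA, e] using hA0
  · ext m
    rw [hA, linearCombination_J3col, ← hrec, hM,
      J5col_apply (M := M) (fun _ => rfl) (fun _ => rfl) (fun _ => rfl) hsymm hband]
  · rw [hA, e, Finsupp.linearCombination_single, one_smul, ← Finsupp.linearCombination_apply]
    simpa [B] using (B.linearCombination_repr (T (r n))).symm

/-- Characterization of model representations: an operator `T` on polynomials satisfying
conditions (ii) and (iii) is the model representation in `L²_σ` of the associated operator
of a Jacobi-type pencil built on the Jacobi matrix of the orthonormal polynomials of `σ`. -/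
theorem model_representation_characterization (σ : Measure ℝ) [IsProbabilityMeasure σ]
    (hmom : HasFiniteMoments σ) (hpos : PosOnPolys σ)
    (r : ℕ → Polynomial ℂ) (hdeg : ∀ n : ℕ, (r n).degree = n)
    (hlead : ∀ n : ℕ, 0 < ((r n).leadingCoeff).re ∧ ((r n).leadingCoeff).im = 0)
    (horth : ∀ n m : ℕ, ipm σ (r n) (r m) = if n = m then 1 else 0)
    (a b : ℕ → ℝ) (hapos : ∀ n, 0 < a n)
    (hrec : ∀ n : ℕ, X * r n =
      C (extZ a ((n : ℤ) - 1) : ℂ) * extP r ((n : ℤ) - 1) + C (b n : ℂ) * r n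
        + C (a n : ℂ) * r (n + 1))
    (T : Module.End ℂ (Polynomial ℂ)) (hII : CondII T) (hIII : CondIII σ T) :
    ∃ Θ : JacobiPencil, Θ.a = a ∧ Θ.b = b ∧
      ∃ A : Module.End ℂ (ℕ →₀ ℂ), IsAssociatedOperator Θ A ∧
        ∀ n : ℕ, T (r n) = (A (e n)).sum fun m c => c • r m :=
  model_representation_characterization_general σ hmom r hdeg hlead horth a b hapos hrec T hII hIII

end
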